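/- Let f(ζ) = (15/16) ∑_{k≥1} k/((k²-1/4)(k²-9/4)) · (-ζ)^k, which converges for |ζ| ≤ 1. Then lim_{u → 0+} (f(-1+u) + 5/8)/(u² · log u) = -15/32, where the limit is along real u in (0,1). -/

import Mathlib

/-! With `x = √(1 - u)` the series is `∑ aₖ x^{2k}`. Partial fractions split
`aₖ = k / ((k² - 1/4)(k² - 9/4))` into `1/(k ∓ 3/2)` and `1/(k ∓ 1/2)`, and each series
`∑ x^{2k} / (k + c)` with `c` a half-integer is a shifted, rescaled copy of
`artanh x = ∑ x^{2k+1} / (2k+1)`. This yields the closed form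
`f(-1 + u) + 5/8 = (15/32) u² (artanh x · (2 - u) / x³ - 1/(1 - u))`,
and `artanh x = log (1 + x) - (log u) / 2` makes the bracket `-(1 + o(1)) log u` as `u → 0⁺`. -/

noncomputable def stmt7f (ζ : ℝ) : ℝ :=
  (15 / 16) * ∑' k : ℕ,
    (k : ℝ) / (((k : ℝ) ^ 2 - 1 / 4) * ((k : ℝ) ^ 2 - 9 / 4)) * (-ζ) ^ k

open Real Filter Set Topology

namespace Real

theorem artanh_eq_half_log_sub_log {x : ℝ} (hx : x ∈ Ioo (-1) 1) :
    artanh x = (log (1 + x) - log (1 - x)) / 2 := by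
  rw [artanh_eq_half_log (Ioo_subset_Icc_self hx),
    log_div (by linarith [hx.1]) (by linarith [hx.2])]
  ring

theorem artanh_eq_log_one_add_sub_half_log {x : ℝ} (hx : x ∈ Ioo (-1) 1) :
    artanh x = log (1 + x) - log (1 - x ^ 2) / 2 := by
  rw [artanh_eq_half_log_sub_log hx, show 1 - x ^ 2 = (1 - x) * (1 + x) by ring,
    log_mul (by linarith [hx.2]) (by linarith [hx.1])]
  ring

theorem hasSum_artanh {x : ℝ} (hx : x ∈ Ioo (-1) 1) :
    HasSum (fun k : ℕ => x ^ (2 * k + 1) / (2 * k + 1)) (artanh x) := by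
  rw [artanh_eq_half_log_sub_log hx]
  refine ((hasSum_log_sub_log_of_abs_lt_one (abs_lt.2 hx)).div_const 2).congr_fun fun k => ?_
  ring

end Real

theorem div_sq_sub_mul_sq_sub {t : ℝ} (h₁ : t ^ 2 ≠ 1 / 4) (h₃ : t ^ 2 ≠ 9 / 4) :
    t / ((t ^ 2 - 1 / 4) * (t ^ 2 - 9 / 4)) =
      (1 / (t - 3 / 2) + 1 / (t + 3 / 2) - 1 / (t - 1 / 2) - 1 / (t + 1 / 2)) / 4 := by
  have h₁' : (t - 1 / 2) * (t + 1 / 2) ≠ 0 := by contrapose! h₁; linear_combination h₁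
  have h₃' : (t - 3 / 2) * (t + 3 / 2) ≠ 0 := by contrapose! h₃; linear_combination h₃
  obtain ⟨hm₁, hp₁⟩ := mul_ne_zero_iff.1 h₁'
  obtain ⟨hm₃, hp₃⟩ := mul_ne_zero_iff.1 h₃'
  rw [div_add_div _ _ hm₃ hp₃, div_sub_div _ _ h₃' hm₁, div_sub_div _ _ (mul_ne_zero h₃' hm₁) hp₁,
    div_div, div_eq_div_iff (by rw [← sub_ne_zero] at h₁ h₃; positivity) (by positivity)]
  ring

theorem natCast_sq_ne_odd_sq_div_four (k : ℕ) {n : ℕ} (hn : Odd n) :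
    (k : ℝ) ^ 2 ≠ n ^ 2 / 4 := by
  intro h
  have h2k : ((2 * k : ℕ) : ℝ) ^ 2 = (n : ℝ) ^ 2 := by push_cast; linear_combination 4 * h
  rw [← Nat.pow_left_injective two_ne_zero (by exact_mod_cast h2k : (2 * k) ^ 2 = n ^ 2)] at hn
  exact Nat.not_odd_iff_even.2 (even_two_mul k) hn

section ArtanhSeries

variable {x : ℝ}

theorem hasSum_sq_pow_div_add_half (hx : x ∈ Ioo (-1) 1) (hx0 : x ≠ 0) (m : ℕ) :
    HasSum (fun k : ℕ => (x ^ 2) ^ k / (k + m + 1 / 2))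
      (2 / x ^ (2 * m + 1) * (artanh x - ∑ j ∈ Finset.range m, x ^ (2 * j + 1) / (2 * j + 1))) := by
  refine (((hasSum_nat_add_iff' m).mpr (hasSum_artanh hx)).mul_left _).congr_fun fun k => ?_
  push_cast
  rw [← pow_mul, show 2 * (k + m) + 1 = 2 * k + (2 * m + 1) by ring, pow_add]
  field_simp
  ring

theorem hasSum_sq_pow_div_sub_half (hx : x ∈ Ioo (-1) 1) (m : ℕ) :
    HasSum (fun k : ℕ => (x ^ 2) ^ k / (k - m - 1 / 2))
      (2 * x ^ (2 * m + 1) * artanh x +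
        ∑ k ∈ Finset.range (m + 1), (x ^ 2) ^ k / (k - m - 1 / 2)) := by
  refine (hasSum_nat_add_iff' (m + 1)).mp ?_
  rw [add_sub_cancel_right]
  refine ((hasSum_artanh hx).mul_left _).congr_fun fun k => ?_
  push_cast
  rw [← pow_mul, show 2 * (k + (m + 1)) = (2 * k + 1) + (2 * m + 1) by ring, pow_add,
    show (k : ℝ) + (m + 1) - m - 1 / 2 = k + 1 / 2 by ring]
  field_simp

theorem hasSum_stmt7f_coeff_mul_sq_pow (hx : x ∈ Ioo (-1) 1) (hx0 : x ≠ 0) :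
    HasSum (fun k : ℕ => (k : ℝ) / (((k : ℝ) ^ 2 - 1 / 4) * ((k : ℝ) ^ 2 - 9 / 4)) * (x ^ 2) ^ k)
      ((artanh x * (1 + x ^ 2) * (1 - x ^ 2) ^ 2 / x ^ 3 - x ^ 2 - 1 / x ^ 2 + 2 / 3) / 2) := by
  have h := ((((hasSum_sq_pow_div_sub_half hx 1).add (hasSum_sq_pow_div_add_half hx hx0 1)).sub
    (hasSum_sq_pow_div_sub_half hx 0)).sub (hasSum_sq_pow_div_add_half hx hx0 0)).div_const 4
  convert h using 1
  · rfl
  · ext k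
    rw [div_sq_sub_mul_sq_sub (by simpa using natCast_sq_ne_odd_sq_div_four k odd_one)
      (by convert natCast_sq_ne_odd_sq_div_four k (n := 3) ⟨1, rfl⟩ using 2; norm_num)]
    push_cast
    ring
  norm_num [Finset.sum_range_succ]
  field_simp
  ring

end ArtanhSeries

theorem stmt7f_neg_one_add_add_five_div_eight {u : ℝ} (hu : u ∈ Ioo 0 1) :
    stmt7f (-1 + u) + 5 / 8 =
      15 / 32 * u ^ 2 * (artanh √(1 - u) * (2 - u) / √(1 - u) ^ 3 - 1 / (1 - u)) := by
  have h1u : 0 < 1 - u := by linarith [hu.2]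
  have hs0 : 0 < √(1 - u) := sqrt_pos.2 h1u
  have hsq : √(1 - u) ^ 2 = 1 - u := sq_sqrt h1u.le
  have hs1 : √(1 - u) < 1 := by rw [sqrt_lt' one_pos]; linarith [hu.1]
  have hsum := hasSum_stmt7f_coeff_mul_sq_pow ⟨by linarith, hs1⟩ hs0.ne'
  rw [hsq] at hsum
  rw [stmt7f, neg_add, neg_neg, ← sub_eq_add_neg, hsum.tsum_eq, show 1 - (1 - u) = u by ring]
  field_simp
  ring

theorem stmt7f_cusp_quotient_eq {u : ℝ} (hu : u ∈ Ioo 0 1) :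
    (stmt7f (-1 + u) + 5 / 8) / (u ^ 2 * log u) =
      15 / 32 * ((log (1 + √(1 - u)) * (2 - u) / √(1 - u) ^ 3 - 1 / (1 - u)) / log u
        - (2 - u) / (2 * √(1 - u) ^ 3)) := by
  have h1u : 0 < 1 - u := by linarith [hu.2]
  have hs : √(1 - u) ∈ Ioo (-1) 1 :=
    ⟨by linarith [sqrt_nonneg (1 - u)], by rw [sqrt_lt' one_pos]; linarith [hu.1]⟩
  have hu0 : u ≠ 0 := hu.1.ne'
  have hlog : log u ≠ 0 := (log_neg hu.1 hu.2).ne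
  have hs0 : √(1 - u) ≠ 0 := (sqrt_pos.2 h1u).ne'
  rw [stmt7f_neg_one_add_add_five_div_eight hu, artanh_eq_log_one_add_sub_half_log hs,
    sq_sqrt h1u.le, show 1 - (1 - u) = u by ring]
  field_simp
  ring

theorem tendsto_div_log_nhdsGT_zero {f : ℝ → ℝ} {a : ℝ} (hf : Tendsto f (𝓝[>] 0) (𝓝 a)) :
    Tendsto (fun u => f u / log u) (𝓝[>] 0) (𝓝 0) := by
  simpa [div_eq_mul_inv] using hf.mul (tendsto_inv_atBot_zero.comp tendsto_log_nhdsGT_zero)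

/-- Logarithmic cusp at `-1`: `(f(-1+u) + 5/8)/(u² log u) → -15/32` as `u → 0⁺`. -/
theorem stmt_7 :
    Filter.Tendsto (fun u : ℝ => (stmt7f (-1 + u) + 5 / 8) / (u ^ 2 * Real.log u))
      (nhdsWithin 0 (Set.Ioo 0 1)) (nhds (-15 / 32)) := by
  have hA : ContinuousAt
      (fun u : ℝ => log (1 + √(1 - u)) * (2 - u) / √(1 - u) ^ 3 - 1 / (1 - u)) 0 := by
    fun_prop (disch := norm_num)
  have hB : ContinuousAt (fun u : ℝ => (2 - u) / (2 * √(1 - u) ^ 3)) 0 := by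
    fun_prop (disch := norm_num)
  have hlim := ((tendsto_div_log_nhdsGT_zero (hA.tendsto.mono_left nhdsWithin_le_nhds)).sub
    (hB.tendsto.mono_left nhdsWithin_le_nhds)).const_mul (15 / 32)
  refine tendsto_nhdsWithin_congr (fun u hu => (stmt7f_cusp_quotient_eq hu).symm) ?_
  convert hlim.mono_left (nhdsWithin_mono _ Ioo_subset_Ioi_self) using 2
  norm_num
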